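/- Let $B_{i,j}$ for $i=1,\ldots,n$, $j=1,\ldots,p$ be pairs of integer polyhedra in $\mathbb{R}^m$ with a common support cone and bounded symmetric differences. Let $B_{1,j}*\cdots*B_{n,j}$ be the componentwise prism over the pairs. Then the relative lattice-point count of the Minkowski sum of the prisms satisfies $I\big(\sum_{j=1}^p B_{1,j}*\cdots*B_{n,j}\big) = \sum_{a_1+\cdots+a_n = p,\ a_i \geq 0} I\Big(\bigvee_{J_1\sqcup\cdots\sqcup J_n = \{1,\ldots,p\},\ |J_i|=a_i} \sum_{i,\ j\in J_i} B_{i,j}\Big)$, where $\bigvee$ denotes the componentwise convex hull of unions of pairs, and $I(\Gamma,\Delta) = \#((\Gamma\setminus\Delta)\cap\mathbb{Z}) - \#((\Delta\setminus\Gamma)\cap\mathbb{Z})$. -/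

import Mathlib

open Pointwise

def dot {m : ℕ} (γ x : Fin m → ℝ) : ℝ := ∑ j, γ j * x j

def ι {m : ℕ} (x : Fin m → ℤ) : Fin m → ℝ := fun j => (x j : ℝ)

/-- An integer polyhedron with support cone `Γ`. -/
def IsLatticePolyhedron {m : ℕ} (Γ : Set (Fin m → ℝ)) (N : Set (Fin m → ℝ)) : Prop :=
  ∃ V : Finset (Fin m → ℤ), V.Nonempty ∧
    N = convexHull ℝ (ι '' (V : Set (Fin m → ℤ))) + {x | ∀ γ ∈ Γ, 0 ≤ dot γ x}

/-- Relative lattice point count in `ℝ^m`. -/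
noncomputable def Icount {m : ℕ} (AB : Set (Fin m → ℝ) × Set (Fin m → ℝ)) : ℤ :=
  (((AB.1 \ AB.2) ∩ Set.range (ι (m := m))).ncard : ℤ)
    - (((AB.2 \ AB.1) ∩ Set.range (ι (m := m))).ncard : ℤ)

/-- The lattice `ℤ^{n-1} ⊕ ℤ^m` in `ℝ^{n-1} ⊕ ℝ^m`. -/
def prodLattice (n' m : ℕ) : Set ((Fin n' → ℝ) × (Fin m → ℝ)) :=
  {z | (∃ u : Fin n' → ℤ, z.1 = ι u) ∧ (∃ v : Fin m → ℤ, z.2 = ι v)}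

/-- Relative lattice point count in `ℝ^{n-1} ⊕ ℝ^m`. -/
noncomputable def IcountProd {n' m : ℕ}
    (AB : Set ((Fin n' → ℝ) × (Fin m → ℝ)) × Set ((Fin n' → ℝ) × (Fin m → ℝ))) : ℤ :=
  (((AB.1 \ AB.2) ∩ prodLattice n' m).ncard : ℤ)
    - (((AB.2 \ AB.1) ∩ prodLattice n' m).ncard : ℤ)

/-- The vertices `b₁ = 0, b₂ = e₁, …, bₙ = e_{n-1}` of the standard simplex in `ℝ^{n-1}`. -/
def simpVert (n' : ℕ) : Fin (n' + 1) → (Fin n' → ℝ) :=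
  Fin.cases 0 (fun j => Pi.single j (1 : ℝ))

/-- The prism over `n` sets. -/
def prism {n' m : ℕ} (Δ : Fin (n' + 1) → Set (Fin m → ℝ)) :
    Set ((Fin n' → ℝ) × (Fin m → ℝ)) :=
  convexHull ℝ (⋃ i, ({simpVert n' i} : Set (Fin n' → ℝ)) ×ˢ Δ i)

/-- The componentwise prism over `n` pairs. -/
def prismPair {n' m : ℕ} (B : Fin (n' + 1) → Set (Fin m → ℝ) × Set (Fin m → ℝ)) :
    Set ((Fin n' → ℝ) × (Fin m → ℝ)) × Set ((Fin n' → ℝ) × (Fin m → ℝ)) :=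
  (prism (fun i => (B i).1), prism (fun i => (B i).2))

/-!
Slicing the sum of prisms `∑ⱼ B_{1,j} * ⋯ * B_{n,j}` at the lattice point `∑ᵢ aᵢ bᵢ` of the
dilated simplex gives exactly `⋁_{|Jᵢ| = aᵢ} ∑ᵢ ∑_{j ∈ Jᵢ} B_{i,j}`. One inclusion is convexity of
the sum of prisms. For the other, a point of the slice is `∑ⱼ ∑ᵢ tⱼᵢ xⱼᵢ` with `xⱼᵢ ∈ B_{i,j}`,
where the weight matrix `t` has row sums `1` and column sums `aᵢ`; Birkhoff's theorem writes `t` as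
a convex combination of the `0/1` matrices of ordered partitions with `|Jᵢ| = aᵢ`. Every lattice
point of the sum of prisms lies over such a point `∑ᵢ aᵢ bᵢ`, so the relative lattice count splits
into the slices. The slice counts are finite because pairs `(K + C, L + C)` with `K`, `L`
bounded and bounded symmetric difference stay such pairs under Minkowski sums and under convex
hulls of unions.
-/

open Bornology Set

lemma isBounded_sdiff_iff {E : Type*} [SeminormedAddCommGroup E] {A B : Set E} :
    IsBounded (A \ B) ↔ ∃ R, ∀ x ∈ A, R < ‖x‖ → x ∈ B := by
  simp only [isBounded_iff_forall_norm_le, mem_sdiff, and_imp]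
  refine exists_congr fun R => forall₂_congr fun x _ => ?_
  exact ⟨fun h hR => by_contra fun hx => (h hx).not_gt hR,
    fun h hx => le_of_not_gt fun hR => hx (h hR)⟩

lemma convexHull_union_add_eq {E : Type*} [AddCommGroup E] [Module ℝ E] {K K' D : Set E}
    (hD : Convex ℝ D) : convexHull ℝ ((K + D) ∪ (K' + D)) = convexHull ℝ (K ∪ K') + D := by
  rw [← union_add, convexHull_add, hD.convexHull_eq]

lemma mem_convexHull_iUnion_iff {ι E : Type*} [Fintype ι] [AddCommGroup E] [Module ℝ E]
    {s : ι → Set E} (hs : ∀ i, Convex ℝ (s i)) (hne : ∀ i, (s i).Nonempty) {x : E} :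
    x ∈ convexHull ℝ (⋃ i, s i) ↔ ∃ (t : ι → ℝ) (z : ι → E), (∀ i, 0 ≤ t i) ∧ ∑ i, t i = 1 ∧
      (∀ i, z i ∈ s i) ∧ ∑ i, t i • z i = x := by
  classical
  refine ⟨fun hx => ?_, fun ⟨t, z, ht, ht₁, hz, hx⟩ =>
    mem_convexHull_of_exists_fintype t z ht ht₁ (fun i => mem_iUnion.2 ⟨i, hz i⟩) hx⟩
  obtain ⟨κ, _, w, y, hw, hw₁, hy, rfl⟩ := mem_convexHull_iff_exists_fintype.1 hx
  choose φ hφ using fun k => mem_iUnion.1 (hy k)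
  -- group the points `y k` by the set `s (φ k)` they come from, and average inside each group
  let F i : Finset κ := {k | φ k = i}
  let t i := ∑ k ∈ F i, w k
  let z i := if t i = 0 then (hne i).some else (F i).centerMass w y
  have ht : ∀ i, 0 ≤ t i := fun i => Finset.sum_nonneg fun k _ => hw k
  have htz : ∀ i, t i • z i = ∑ k ∈ F i, w k • y k := fun i => by
    by_cases hti : t i = 0
    · have hw0 : ∀ k ∈ F i, w k = 0 := (Finset.sum_eq_zero_iff_of_nonneg fun k _ => hw k).1 hti
      simp only [hti, zero_smul]
      exact (Finset.sum_eq_zero fun k hk => by rw [hw0 k hk, zero_smul]).symm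
    · simp only [z, if_neg hti, Finset.centerMass, smul_smul, t, mul_inv_cancel₀ hti, one_smul]
  refine ⟨t, z, ht, (Finset.sum_fiberwise _ φ w).trans hw₁, fun i => ?_,
    by simp only [htz]; exact Finset.sum_fiberwise _ φ _⟩
  by_cases hti : t i = 0
  · simp only [z, if_pos hti, (hne i).some_mem]
  · simp only [z, if_neg hti]
    exact (hs i).centerMass_mem (fun k _ => hw k) ((ht i).lt_of_ne' hti)
      fun k hk => (Finset.mem_filter.1 hk).2 ▸ hφ k

section ConePair

variable {E : Type*} [NormedAddCommGroup E] [NormedSpace ℝ E] {C : PointedCone ℝ E}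
  {K K' L L' : Set E}

/-- A point far out in `K + K' + C` splits its cone part evenly between `K` and `K'`; both
halves are then far out, so they lie in `L + C` and `L' + C`. -/
lemma isBounded_add_sdiff_add (hK : IsBounded K) (hK' : IsBounded K')
    (h : IsBounded ((K + (C : Set E)) \ (L + (C : Set E))))
    (h' : IsBounded ((K' + (C : Set E)) \ (L' + (C : Set E)))) :
    IsBounded ((K + K' + (C : Set E)) \ (L + L' + (C : Set E))) := by
  rw [isBounded_sdiff_iff] at h h' ⊢
  obtain ⟨R₁, hR₁⟩ := h
  obtain ⟨R₂, hR₂⟩ := h'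
  obtain ⟨ρ, hρ⟩ := isBounded_iff_forall_norm_le.1 (hK.union hK')
  refine ⟨2 * max R₁ R₂ + 4 * ρ, ?_⟩
  rintro _ ⟨_, ⟨k, hk, k', hk', rfl⟩, c, hc, rfl⟩ hfar
  have hd : (1 / 2 : ℝ) • c ∈ C := C.smul_mem (by norm_num) hc
  have hkρ := hρ k (.inl hk)
  have hk'ρ := hρ k' (.inr hk')
  have hnorm := norm_add₃_le (a := k) (b := k') (c := c)
  have hd_norm : ‖(1 / 2 : ℝ) • c‖ = ‖c‖ / 2 := by rw [norm_smul]; norm_num; ring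
  have h₁ := norm_le_add_norm_add ((1 / 2 : ℝ) • c) k
  have h₂ := norm_le_add_norm_add ((1 / 2 : ℝ) • c) k'
  have hmem₁ := hR₁ _ (add_mem_add hk hd) (by rw [add_comm]; linarith [le_max_left R₁ R₂])
  have hmem₂ := hR₂ _ (add_mem_add hk' hd) (by rw [add_comm]; linarith [le_max_right R₁ R₂])
  obtain ⟨l, hl, e, he, hle⟩ := hmem₁
  obtain ⟨l', hl', e', he', hle'⟩ := hmem₂
  refine ⟨l + l', add_mem_add hl hl', e + e', C.add_mem he he', ?_⟩
  dsimp only at hle hle' ⊢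
  rw [add_add_add_comm, hle, hle']
  module

/-- For a far point `z + c` with `z ∈ convexHull (K ∪ K')`, the translates `K + c` and `K' + c`
are far out, so they lie in the convex set `convexHull (L ∪ L') + C`, and hence so does
`convexHull (K ∪ K') + c`. -/
lemma isBounded_convexHull_union_add_sdiff (hK : IsBounded K) (hK' : IsBounded K')
    (h : IsBounded ((K + (C : Set E)) \ (L + (C : Set E))))
    (h' : IsBounded ((K' + (C : Set E)) \ (L' + (C : Set E)))) :
    IsBounded ((convexHull ℝ (K ∪ K') + (C : Set E)) \
      (convexHull ℝ (L ∪ L') + (C : Set E))) := by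
  rw [isBounded_sdiff_iff] at h h' ⊢
  obtain ⟨R₁, hR₁⟩ := h
  obtain ⟨R₂, hR₂⟩ := h'
  obtain ⟨ρ, hρ⟩ := isBounded_iff_forall_norm_le.1 (hK.union hK')
  refine ⟨max R₁ R₂ + 2 * ρ, ?_⟩
  rintro _ ⟨z, hz, c, hc, rfl⟩ hfar
  have hzρ : ‖z‖ ≤ ρ := by
    simpa using convexHull_min (fun x hx => mem_closedBall_zero_iff.2 (hρ x hx))
      (convex_closedBall 0 ρ) hz
  have hcvx : Convex ℝ (convexHull ℝ (L ∪ L') + (C : Set E)) :=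
    (convex_convexHull ℝ _).add C.convex
  have hsub : ∀ {M : Set E}, M ⊆ L ∪ L' → M + (C : Set E) ⊆ convexHull ℝ (L ∪ L') + C :=
    fun hM => add_subset_add_right (hM.trans (subset_convexHull ℝ _))
  suffices K ∪ K' ⊆ (· + c) ⁻¹' (convexHull ℝ (L ∪ L') + (C : Set E)) from
    convexHull_min this (hcvx.translate_preimage_left c) hz
  intro k hk
  have hfar' : max R₁ R₂ < ‖k + c‖ := by
    dsimp only at hfar
    linarith [hρ k hk, add_comm c k ▸ norm_le_add_norm_add c k, norm_add_le z c]
  rcases hk with hk | hk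
  · exact hsub subset_union_left (hR₁ _ (add_mem_add hk hc) ((le_max_left _ _).trans_lt hfar'))
  · exact hsub subset_union_right (hR₂ _ (add_mem_add hk hc) ((le_max_right _ _).trans_lt hfar'))

variable (C) in
def IsConePair (A B : Set E) : Prop :=
  ∃ K L : Set E, IsBounded K ∧ IsBounded L ∧ A = K + (C : Set E) ∧ B = L + (C : Set E) ∧
    IsBounded (symmDiff A B)

namespace IsConePair

variable {A A' B B' : Set E}

lemma isBounded_symmDiff (h : IsConePair C A B) : IsBounded (symmDiff A B) := by
  obtain ⟨_, _, _, _, _, _, hs⟩ := h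
  exact hs

lemma add (h : IsConePair C A B) (h' : IsConePair C A' B') : IsConePair C (A + A') (B + B') := by
  obtain ⟨K, L, hK, hL, rfl, rfl, hs⟩ := h
  obtain ⟨K', L', hK', hL', rfl, rfl, hs'⟩ := h'
  have hC : ∀ M M' : Set E, M + (C : Set E) + (M' + C) = M + M' + C := fun M M' => by
    rw [add_add_add_comm, coe_add_coe]
  rw [Set.symmDiff_def, isBounded_union] at hs hs'
  refine ⟨K + K', L + L', hK.add hK', hL.add hL', hC K K', hC L L', ?_⟩
  rw [Set.symmDiff_def, isBounded_union, hC, hC]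
  exact ⟨isBounded_add_sdiff_add hK hK' hs.1 hs'.1, isBounded_add_sdiff_add hL hL' hs.2 hs'.2⟩

lemma convexHull_union (h : IsConePair C A B) (h' : IsConePair C A' B') :
    IsConePair C (convexHull ℝ (A ∪ A')) (convexHull ℝ (B ∪ B')) := by
  obtain ⟨K, L, hK, hL, rfl, rfl, hs⟩ := h
  obtain ⟨K', L', hK', hL', rfl, rfl, hs'⟩ := h'
  rw [Set.symmDiff_def, isBounded_union] at hs hs'
  refine ⟨convexHull ℝ (K ∪ K'), convexHull ℝ (L ∪ L'), isBounded_convexHull.2 (hK.union hK'),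
    isBounded_convexHull.2 (hL.union hL'), convexHull_union_add_eq C.convex,
    convexHull_union_add_eq C.convex, ?_⟩
  rw [Set.symmDiff_def, isBounded_union, convexHull_union_add_eq C.convex,
    convexHull_union_add_eq C.convex]
  exact ⟨isBounded_convexHull_union_add_sdiff hK hK' hs.1 hs'.1,
    isBounded_convexHull_union_add_sdiff hL hL' hs.2 hs'.2⟩

lemma sum {κ : Type*} {s : Finset κ} (hs : s.Nonempty) {A B : κ → Set E}
    (h : ∀ k ∈ s, IsConePair C (A k) (B k)) : IsConePair C (∑ k ∈ s, A k) (∑ k ∈ s, B k) := by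
  induction hs using Finset.Nonempty.cons_induction with
  | singleton k => simpa using h k (by simp)
  | cons k s hk hs ih =>
    simp only [Finset.forall_mem_cons] at h
    simpa only [Finset.sum_cons] using h.1.add (ih h.2)

lemma convexHull_biUnion {κ : Type*} {s : Finset κ} (hs : s.Nonempty) {A B : κ → Set E}
    (h : ∀ k ∈ s, IsConePair C (A k) (B k)) :
    IsConePair C (convexHull ℝ (⋃ k ∈ s, A k)) (convexHull ℝ (⋃ k ∈ s, B k)) := by
  induction hs using Finset.Nonempty.cons_induction with
  | singleton k => simpa using (h k (by simp)).convexHull_union (h k (by simp))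
  | cons k s hk hs ih =>
    classical
    simp only [Finset.forall_mem_cons] at h
    rw [Finset.cons_eq_insert, Finset.set_biUnion_insert, Finset.set_biUnion_insert,
      ← convexHull_convexHull_union_right (A k), ← convexHull_convexHull_union_right (B k)]
    exact h.1.convexHull_union (ih h.2)

end IsConePair

end ConePair

section Partitions

open Finset

variable {ι κ E : Type*} [AddCommGroup E] [Module ℝ E]

def orderedPartitions (a : ι → ℕ) : Set (ι → Finset κ) :=
  {J | (Pairwise fun i i' => Disjoint (J i) (J i')) ∧ (∀ j₀ : κ, ∃ i, j₀ ∈ J i) ∧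
    (∀ i, (J i).card = a i)}

/-- `⋁_{|Jᵢ| = aᵢ} ∑ᵢ ∑_{j ∈ Jᵢ} Δ i j` in the notation of the paper. -/
def partitionHull [Fintype ι] (Δ : ι → κ → Set E) (a : ι → ℕ) : Set E :=
  convexHull ℝ (⋃ J ∈ orderedPartitions a, ∑ i, ∑ j ∈ J i, Δ i j)

variable [Fintype κ] [DecidableEq ι]

def assignments (a : ι → ℕ) : Set (κ → ι) := {f | ∀ i, #{j | f j = i} = a i}

lemma orderedPartitions_eq_image (a : ι → ℕ) :
    (orderedPartitions a : Set (ι → Finset κ)) =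
      (fun f i => ({j | f j = i} : Finset κ)) '' (assignments a : Set (κ → ι)) := by
  ext J
  constructor
  · rintro ⟨hdisj, hcov, hcard⟩
    choose f hf using hcov
    have hJ : J = fun i => ({j | f j = i} : Finset κ) := by
      ext i j
      simp only [mem_filter, Finset.mem_univ, true_and]
      refine ⟨fun hj => by_contra fun hne => disjoint_left.1 (hdisj hne) (hf j) hj, ?_⟩
      rintro rfl
      exact hf j
    subst hJ
    exact ⟨f, hcard, rfl⟩
  · rintro ⟨f, hf, rfl⟩
    exact ⟨fun i i' hne => disjoint_filter.2 fun j _ h h' => hne (h.symm.trans h'),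
      fun j => ⟨f j, by simp⟩, hf⟩

def mergeFibres (f : κ → ι) : Matrix κ κ ℝ →ₗ[ℝ] κ → ι → ℝ where
  toFun N j i := ∑ k with f k = i, N j k
  map_add' N N' := by ext; simp [sum_add_distrib]
  map_smul' c N := by ext; simp [mul_sum]

lemma mergeFibres_mem_convexHull [DecidableEq κ] {a : ι → ℕ} {f : κ → ι}
    (hf : f ∈ assignments a) {M : Matrix κ κ ℝ} (hM : M ∈ doublyStochastic ℝ κ) :
    mergeFibres f M ∈ convexHull ℝ ((fun g j => Pi.single (g j) 1) '' assignments a) := by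
  have hσ : ∀ σ : Equiv.Perm κ,
      mergeFibres f (σ.permMatrix ℝ) = fun j => Pi.single (f (σ j)) 1 := fun σ => by
      ext j i
      simp only [mergeFibres, LinearMap.coe_mk, AddHom.coe_mk, Equiv.Perm.permMatrix,
        PEquiv.toMatrix_apply, Equiv.toPEquiv_apply, Option.mem_def, Option.some.injEq,
        sum_ite_eq, mem_filter, Finset.mem_univ, true_and, Pi.single_apply]
      exact if_congr eq_comm rfl rfl
  have hσa : ∀ σ : Equiv.Perm κ, f ∘ σ ∈ assignments a := fun σ i => by
    rw [← hf i, card_filter, card_filter]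
    exact Equiv.sum_comp σ fun k => if f k = i then 1 else 0
  refine convexHull_mono ?_ (((mergeFibres f).image_convexHull _).subset
    (mem_image_of_mem _ (doublyStochastic_eq_convexHull_permMatrix.subset hM)))
  rintro _ ⟨_, ⟨σ, rfl⟩, rfl⟩
  exact ⟨f ∘ σ, hσa σ, (hσ σ).symm⟩

variable [Fintype ι]

lemma sum_sum_filter_eq {M : Type*} [AddCommMonoid M] (f : κ → ι) (g : ι → κ → M) :
    ∑ i, ∑ j with f j = i, g i j = ∑ j, g (f j) j := by
  rw [← sum_fiberwise univ f fun j => g (f j) j]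
  refine sum_congr rfl fun i _ => sum_congr rfl fun j hj => ?_
  rw [(mem_filter.1 hj).2]

lemma partitionHull_eq (Δ : ι → κ → Set E) (a : ι → ℕ) :
    partitionHull Δ a = convexHull ℝ (⋃ f ∈ assignments a, ∑ j, Δ (f j) j) := by
  simp_rw [partitionHull, orderedPartitions_eq_image, biUnion_image, sum_sum_filter_eq]

lemma sum_comp_of_mem_assignments {M : Type*} [AddCommMonoid M] {a : ι → ℕ} {f : κ → ι}
    (hf : f ∈ assignments a) (g : ι → M) : ∑ j, g (f j) = ∑ i, a i • g i := by
  rw [← sum_fiberwise' univ f g]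
  simp [hf _]

lemma assignments_nonempty (a : ι → ℕ) (h : ∑ i, a i = Fintype.card κ) :
    (assignments a : Set (κ → ι)).Nonempty := by
  let e : κ ≃ Σ i, Fin (a i) := Fintype.equivOfCardEq (by simp [h])
  refine ⟨fun j => (e j).1, fun i => ?_⟩
  rw [card_filter, Fintype.sum_equiv e _ (fun s => if s.1 = i then 1 else 0) fun _ => rfl,
    Fintype.sum_sigma]
  simp [apply_ite card]

theorem mem_convexHull_assignments {a : ι → ℕ} {t : κ → ι → ℝ} (ht : ∀ j i, 0 ≤ t j i)
    (hrow : ∀ j, ∑ i, t j i = 1) (hcol : ∀ i, ∑ j, t j i = a i) :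
    t ∈ convexHull ℝ ((fun f j => Pi.single (f j) 1) '' assignments a) := by
  classical
  have hcard : ∑ i, a i = Fintype.card κ := by
    have : ∑ i, (a i : ℝ) = Fintype.card κ := by
      simp_rw [← hcol]
      rw [sum_comm]
      simp [hrow]
    exact_mod_cast this
  obtain ⟨f₀, hf₀⟩ := assignments_nonempty a hcard
  have hpos : ∀ k, (0 : ℝ) < a (f₀ k) := fun k => by
    rw [← hf₀ (f₀ k)]
    exact_mod_cast card_pos.2 ⟨k, by simp⟩
  have hdiv : ∀ j i, a i * (t j i / a i) = t j i := fun j i => by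
    rcases eq_or_ne (a i : ℝ) 0 with h | h
    · rw [h, zero_mul, eq_comm]
      exact (sum_eq_zero_iff_of_nonneg fun j _ => ht j i).1 (by rw [hcol, h]) j (mem_univ j)
    · field_simp
  -- spread column `i` of `t` evenly over the `a i` columns of the fibre of `f₀` over `i`
  let M : Matrix κ κ ℝ := fun j k => t j (f₀ k) / a (f₀ k)
  have hM : M ∈ doublyStochastic ℝ κ := by
    rw [mem_doublyStochastic_iff_sum]
    refine ⟨fun j k => div_nonneg (ht _ _) (Nat.cast_nonneg _), fun j => ?_, fun k => ?_⟩
    · simp only [M, sum_comp_of_mem_assignments hf₀ fun i => t j i / a i, nsmul_eq_mul, hdiv,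
        hrow]
    · simp only [M, ← sum_div, hcol, div_self (hpos k).ne']
  have hM_merge : mergeFibres f₀ M = t := by
    ext j i
    change ∑ k with f₀ k = i, t j (f₀ k) / a (f₀ k) = t j i
    rw [sum_congr rfl fun k hk => by rw [(mem_filter.1 hk).2], sum_const, hf₀ i, nsmul_eq_mul,
      hdiv]
  exact hM_merge ▸ mergeFibres_mem_convexHull hf₀ hM

end Partitions

lemma isBounded_symmDiff_partitionHull {ι κ E : Type*} [Fintype ι] [Fintype κ]
    [DecidableEq ι] [NormedAddCommGroup E] [NormedSpace ℝ E] {C : PointedCone ℝ E}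
    {Δ Δ' : ι → κ → Set E} (h : ∀ i j, IsConePair C (Δ i j) (Δ' i j)) (a : ι → ℕ) :
    IsBounded (symmDiff (partitionHull Δ a) (partitionHull Δ' a)) := by
  rw [partitionHull_eq, partitionHull_eq]
  cases isEmpty_or_nonempty κ
  · simp [Finset.univ_eq_empty]
  obtain hA | hA := (assignments a : Set (κ → ι)).eq_empty_or_nonempty
  · simp [hA]
  have hfin := (assignments a : Set (κ → ι)).toFinite
  rw [← hfin.coe_toFinset]
  exact (IsConePair.convexHull_biUnion (hfin.toFinset_nonempty.2 hA) fun f _ =>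
    IsConePair.sum Finset.univ_nonempty fun j _ => h (f j) j).isBounded_symmDiff

section Lattice

variable {m : ℕ}

lemma finite_inter_range_ι {S : Set (Fin m → ℝ)} (hS : IsBounded S) :
    (S ∩ range (ι (m := m))).Finite := by
  have hι : Isometry (ι (m := m)) :=
    Isometry.of_dist_eq fun x y => by simp only [ι, dist_pi_def]; rfl
  rw [← image_preimage_eq_inter_range]
  exact ((hι.antilipschitz.isBounded_preimage hS).isCompact_closure.finite_of_discrete.subset
    subset_closure).image ι

/-- Its underlying set is, definitionally, the cone `{x | ∀ γ ∈ Γ, 0 ≤ dot γ x}`. -/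
def supportCone (Γ : Set (Fin m → ℝ)) : PointedCone ℝ (Fin m → ℝ) :=
  PointedCone.dual (dotProductBilin ℝ ℝ) Γ

namespace IsLatticePolyhedron

variable {Γ N N' : Set (Fin m → ℝ)}

lemma eq_convexHull_add (h : IsLatticePolyhedron Γ N) :
    ∃ V : Finset (Fin m → ℤ), V.Nonempty ∧
      N = convexHull ℝ (ι '' (V : Set (Fin m → ℤ))) + (supportCone Γ : Set (Fin m → ℝ)) :=
  h

lemma convex (h : IsLatticePolyhedron Γ N) : Convex ℝ N := by
  obtain ⟨V, -, rfl⟩ := h.eq_convexHull_add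
  exact (convex_convexHull ℝ _).add (supportCone Γ).convex

lemma nonempty (h : IsLatticePolyhedron Γ N) : N.Nonempty := by
  obtain ⟨V, hV, rfl⟩ := h.eq_convexHull_add
  exact ((hV.to_set.image ι).mono (subset_convexHull ℝ _)).add ⟨0, (supportCone Γ).zero_mem⟩

lemma isConePair (h : IsLatticePolyhedron Γ N) (h' : IsLatticePolyhedron Γ N')
    (hs : IsBounded (symmDiff N N')) : IsConePair (supportCone Γ) N N' := by
  obtain ⟨V, -, rfl⟩ := h.eq_convexHull_add
  obtain ⟨V', -, rfl⟩ := h'.eq_convexHull_add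
  exact ⟨_, _, isBounded_convexHull.2 (V.finite_toSet.image ι).isBounded,
    isBounded_convexHull.2 (V'.finite_toSet.image ι).isBounded, rfl, rfl, hs⟩

end IsLatticePolyhedron

end Lattice

section Prism

open Finset

variable {n' m p : ℕ}

lemma sum_smul_simpVert_apply (c : Fin (n' + 1) → ℝ) (l : Fin n') :
    (∑ i, c i • simpVert n' i) l = c l.succ := by
  simp [Fin.sum_univ_succ, simpVert, Pi.single_apply]

lemma eq_of_sum_smul_simpVert_eq {c d : Fin (n' + 1) → ℝ} (hsum : ∑ i, c i = ∑ i, d i)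
    (h : ∑ i, c i • simpVert n' i = ∑ i, d i • simpVert n' i) : c = d := by
  have hsucc : ∀ l : Fin n', c l.succ = d l.succ := fun l => by
    simpa only [sum_smul_simpVert_apply] using congrFun h l
  rw [Fin.sum_univ_succ, Fin.sum_univ_succ, sum_congr rfl fun l _ => hsucc l] at hsum
  funext i
  cases i using Fin.cases with
  | zero => linarith
  | succ l => exact hsucc l

def simpPoint (a : Fin (n' + 1) → ℕ) : Fin n' → ℝ := ∑ i, (a i : ℝ) • simpVert n' i

lemma simpPoint_injOn :
    Set.InjOn (simpPoint (n' := n')) (Nat.antidiagonalTuple (n' + 1) p : Set _) := by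
  intro a ha a' ha' h
  have hsum : ∑ i, (a i : ℝ) = ∑ i, (a' i : ℝ) := by
    rw [mem_coe, Nat.mem_antidiagonalTuple] at ha ha'
    exact_mod_cast ha.trans ha'.symm
  funext i
  exact_mod_cast congrFun (eq_of_sum_smul_simpVert_eq hsum h) i

lemma simpPoint_eq_ι (a : Fin (n' + 1) → ℕ) : simpPoint a = ι fun l => (a l.succ : ℤ) := by
  ext l
  rw [simpPoint, sum_smul_simpVert_apply]
  simp [ι]

lemma exists_of_mem_sum_prism {Δ : Fin (n' + 1) → Fin p → Set (Fin m → ℝ)}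
    (hc : ∀ i j, Convex ℝ (Δ i j)) (hne : ∀ i j, (Δ i j).Nonempty) {u : Fin n' → ℝ}
    {v : Fin m → ℝ} (h : (u, v) ∈ ∑ j, prism fun i => Δ i j) :
    ∃ (t : Fin p → Fin (n' + 1) → ℝ) (x : Fin p → Fin (n' + 1) → Fin m → ℝ),
      (∀ j i, 0 ≤ t j i) ∧ (∀ j, ∑ i, t j i = 1) ∧ (∀ j i, x j i ∈ Δ i j) ∧
      u = ∑ i, (∑ j, t j i) • simpVert n' i ∧ v = ∑ j, ∑ i, t j i • x j i := by
  obtain ⟨g, hg, hgu⟩ := (Set.mem_fintype_sum _ _).1 h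
  have hprism := fun j => (mem_convexHull_iUnion_iff
    (s := fun i => ({simpVert n' i} : Set (Fin n' → ℝ)) ×ˢ Δ i j)
    (fun i => (convex_singleton _).prod (hc i j))
    (fun i => (Set.singleton_nonempty _).prod (hne i j))).1 (hg j)
  choose t z ht ht₁ hz hzg using hprism
  refine ⟨t, fun j i => (z j i).2, ht, ht₁, fun j i => (hz j i).2, ?_, ?_⟩
  · have hz₁ : ∀ j i, (z j i).1 = simpVert n' i := fun j i => (hz j i).1
    calc u = (∑ j, g j).1 := by rw [hgu]
      _ = ∑ j, ∑ i, t j i • simpVert n' i := by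
        simp_rw [Prod.fst_sum, ← hzg, Prod.fst_sum, Prod.smul_fst, hz₁]
      _ = ∑ i, (∑ j, t j i) • simpVert n' i := by simp_rw [sum_smul]; exact sum_comm
  · calc v = (∑ j, g j).2 := by rw [hgu]
      _ = _ := by simp_rw [Prod.snd_sum, ← hzg, Prod.snd_sum, Prod.smul_snd]

variable {Δ : Fin (n' + 1) → Fin p → Set (Fin m → ℝ)}

lemma exists_simpPoint_eq_of_mem_sum_prism (hc : ∀ i j, Convex ℝ (Δ i j))
    (hne : ∀ i j, (Δ i j).Nonempty) {u : Fin n' → ℝ} {v : Fin m → ℝ}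
    (h : (u, v) ∈ ∑ j, prism fun i => Δ i j) {z : Fin n' → ℤ} (hz : u = ι z) :
    ∃ a ∈ Nat.antidiagonalTuple (n' + 1) p, u = simpPoint a := by
  obtain ⟨t, -, ht, ht₁, -, hu, -⟩ := exists_of_mem_sum_prism hc hne h
  set c : Fin (n' + 1) → ℝ := fun i => ∑ j, t j i
  have hc_sum : ∑ i, c i = p := by simp only [c]; rw [sum_comm]; simp [ht₁]
  have hc_succ : ∀ l, c l.succ = z l := fun l => by
    rw [← sum_smul_simpVert_apply c l, ← hu, hz]; rfl
  have hc_int : ∀ i, ∃ k : ℤ, c i = k := fun i => by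
    cases i using Fin.cases with
    | zero =>
      refine ⟨p - ∑ l, z l, ?_⟩
      rw [Fin.sum_univ_succ] at hc_sum
      push_cast
      simp only [hc_succ] at hc_sum
      linarith
    | succ l => exact ⟨z l, hc_succ l⟩
  choose k hk using hc_int
  have hca : ∀ i, c i = ((k i).toNat : ℝ) := fun i => by
    have hk₀ : 0 ≤ k i := by exact_mod_cast (hk i).symm.trans_ge (sum_nonneg fun j _ => ht j i)
    rw [hk i, ← Int.toNat_of_nonneg hk₀]
    rfl
  refine ⟨fun i => (k i).toNat, ?_, by simp_rw [hu, simpPoint, ← hca]; rfl⟩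
  rw [Nat.mem_antidiagonalTuple]
  simp_rw [hca] at hc_sum
  exact_mod_cast hc_sum

theorem mk_simpPoint_mem_sum_prism_iff (hc : ∀ i j, Convex ℝ (Δ i j))
    (hne : ∀ i j, (Δ i j).Nonempty) {a : Fin (n' + 1) → ℕ} (ha : ∑ i, a i = p) (v : Fin m → ℝ) :
    (simpPoint a, v) ∈ ∑ j, prism (fun i => Δ i j) ↔ v ∈ partitionHull Δ a := by
  rw [partitionHull_eq]
  constructor
  · intro h
    obtain ⟨t, x, ht, ht₁, hx, hu, rfl⟩ := exists_of_mem_sum_prism hc hne h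
    have hcol : ∀ i, ∑ j, t j i = a i := congrFun (eq_of_sum_smul_simpVert_eq
      (by rw [sum_comm]; simp [ht₁, ← ha]) hu.symm)
    let L : (Fin p → Fin (n' + 1) → ℝ) →ₗ[ℝ] Fin m → ℝ :=
      { toFun := fun s => ∑ j, ∑ i, s j i • x j i
        map_add' := fun s s' => by simp [add_smul, sum_add_distrib]
        map_smul' := fun r s => by simp [smul_sum, smul_smul] }
    refine convexHull_mono ?_ ((L.image_convexHull _).subset
      (mem_image_of_mem L (mem_convexHull_assignments ht ht₁ hcol)))
    rintro _ ⟨_, ⟨f, hf, rfl⟩, rfl⟩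
    refine mem_biUnion hf ?_
    simpa [L, Pi.single_apply] using
      Set.finsetSum_mem_finsetSum univ (fun j => Δ (f j) j) (fun j => x j (f j)) fun j _ => hx j _
  · have hX : Convex ℝ (∑ j, prism fun i => Δ i j) := convex_sum _ fun j _ => convex_convexHull ℝ _
    have hslice : Convex ℝ {v | (simpPoint a, v) ∈ ∑ j, prism fun i => Δ i j} :=
      fun v₁ h₁ v₂ h₂ r s hr hs hrs => by simpa [← add_smul, hrs] using hX h₁ h₂ hr hs hrs
    refine fun hv => convexHull_min (iUnion₂_subset fun f hf w hw => ?_) hslice hv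
    obtain ⟨y, hy, rfl⟩ := (Set.mem_fintype_sum _ _).1 hw
    have hpt : (simpPoint a, ∑ j, y j) = ∑ j, (simpVert n' (f j), y j) := by
      ext : 1
      · simp [Prod.fst_sum, simpPoint, sum_comp_of_mem_assignments hf, Nat.cast_smul_eq_nsmul]
      · simp [Prod.snd_sum]
    change (simpPoint a, ∑ j, y j) ∈ ∑ j, prism fun i => Δ i j
    rw [hpt]
    exact Set.finsetSum_mem_finsetSum _ _ _ fun j _ =>
      subset_convexHull ℝ _ (mem_iUnion.2 ⟨f j, rfl, hy j⟩)

end Prism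

section Counting

open Finset

variable {n' m p : ℕ} {Δ Δ' : Fin (n' + 1) → Fin p → Set (Fin m → ℝ)}

lemma sdiff_sum_prism_inter_prodLattice (hc : ∀ i j, Convex ℝ (Δ i j))
    (hne : ∀ i j, (Δ i j).Nonempty) (hc' : ∀ i j, Convex ℝ (Δ' i j))
    (hne' : ∀ i j, (Δ' i j).Nonempty) :
    ((∑ j, prism fun i => Δ i j) \ (∑ j, prism fun i => Δ' i j)) ∩ prodLattice n' m =
      ⋃ a ∈ (Nat.antidiagonalTuple (n' + 1) p : Set _),
        Prod.mk (simpPoint a) '' ((partitionHull Δ a \ partitionHull Δ' a) ∩ range ι) := by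
  ext ⟨u, v⟩
  simp only [mem_inter_iff, mem_sdiff, mem_iUnion, mem_image, Prod.mk.injEq, mem_coe]
  constructor
  · rintro ⟨⟨h, h'⟩, ⟨z, hz⟩, ⟨w, hw⟩⟩
    obtain ⟨a, ha, rfl⟩ := exists_simpPoint_eq_of_mem_sum_prism hc hne h hz
    have ha' := Nat.mem_antidiagonalTuple.1 ha
    exact ⟨a, ha, v, ⟨⟨(mk_simpPoint_mem_sum_prism_iff hc hne ha' v).1 h,
      fun hv => h' ((mk_simpPoint_mem_sum_prism_iff hc' hne' ha' v).2 hv)⟩, w, hw.symm⟩, rfl, rfl⟩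
  · rintro ⟨a, ha, v, ⟨⟨hv, hv'⟩, w, hw⟩, rfl, rfl⟩
    have ha' := Nat.mem_antidiagonalTuple.1 ha
    exact ⟨⟨(mk_simpPoint_mem_sum_prism_iff hc hne ha' v).2 hv,
      fun h => hv' ((mk_simpPoint_mem_sum_prism_iff hc' hne' ha' v).1 h)⟩,
      ⟨_, simpPoint_eq_ι a⟩, ⟨w, hw.symm⟩⟩

lemma ncard_sdiff_sum_prism_inter_prodLattice (hc : ∀ i j, Convex ℝ (Δ i j))
    (hne : ∀ i j, (Δ i j).Nonempty) (hc' : ∀ i j, Convex ℝ (Δ' i j))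
    (hne' : ∀ i j, (Δ' i j).Nonempty)
    (hfin : ∀ a, ((partitionHull Δ a \ partitionHull Δ' a) ∩ range ι).Finite) :
    (((∑ j, prism fun i => Δ i j) \ (∑ j, prism fun i => Δ' i j)) ∩ prodLattice n' m).ncard =
      ∑ a ∈ Nat.antidiagonalTuple (n' + 1) p,
        ((partitionHull Δ a \ partitionHull Δ' a) ∩ range ι).ncard := by
  rw [sdiff_sum_prism_inter_prodLattice hc hne hc' hne', Set.Finite.ncard_biUnion (finite_toSet _)
    (fun a _ => (hfin a).image _), finsum_mem_coe_finset]
  · exact sum_congr rfl fun a _ => ncard_image_of_injective _ (Prod.mk_right_injective _)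
  · intro a ha a' ha' hne
    refine Set.disjoint_left.2 ?_
    rintro _ ⟨v, -, rfl⟩ ⟨v', -, hv'⟩
    exact hne (simpPoint_injOn ha ha' (Prod.mk.inj hv').1.symm)

theorem icountProd_sum_prismPair {B : Fin (n' + 1) → Fin p → Set (Fin m → ℝ) × Set (Fin m → ℝ)}
    (hc₁ : ∀ i j, Convex ℝ (B i j).1) (hne₁ : ∀ i j, (B i j).1.Nonempty)
    (hc₂ : ∀ i j, Convex ℝ (B i j).2) (hne₂ : ∀ i j, (B i j).2.Nonempty)
    (hfin : ∀ a, (symmDiff (partitionHull (fun i j => (B i j).1) a)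
      (partitionHull (fun i j => (B i j).2) a) ∩ range ι).Finite) :
    IcountProd (∑ j, prismPair fun i => B i j) =
      ∑ a ∈ Nat.antidiagonalTuple (n' + 1) p,
        Icount (partitionHull (fun i j => (B i j).1) a, partitionHull (fun i j => (B i j).2) a) := by
  simp only [IcountProd, Prod.fst_sum, Prod.snd_sum, prismPair]
  rw [ncard_sdiff_sum_prism_inter_prodLattice hc₁ hne₁ hc₂ hne₂
      fun a => (hfin a).subset (inter_subset_inter_left _ subset_union_left),
    ncard_sdiff_sum_prism_inter_prodLattice hc₂ hne₂ hc₁ hne₁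
      fun a => (hfin a).subset (inter_subset_inter_left _ subset_union_right),
    Nat.cast_sum, Nat.cast_sum, ← sum_sub_distrib]
  rfl

end Counting

/-- **Lemma 3.17.** For pairs of integer polyhedra `B_{i,j}` with a common support cone
and bounded symmetric differences,
`I(∑ⱼ B_{1,j} * ⋯ * B_{n,j}) = ∑_{a₁+⋯+aₙ=p} I(⋁_{|Jᵢ|=aᵢ} ∑_{i, j∈Jᵢ} B_{i,j})`,
where `⋁` is the componentwise convex hull of unions over ordered partitions. -/
theorem stmt13 (n' m p : ℕ)
    (B : Fin (n' + 1) → Fin p → Set (Fin m → ℝ) × Set (Fin m → ℝ))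
    (Γ : Set (Fin m → ℝ))
    (hB : ∀ i j, IsLatticePolyhedron Γ (B i j).1 ∧ IsLatticePolyhedron Γ (B i j).2 ∧
      Bornology.IsBounded (symmDiff (B i j).1 (B i j).2)) :
    IcountProd (∑ j, prismPair (fun i => B i j)) =
      ∑ a ∈ Finset.Nat.antidiagonalTuple (n' + 1) p,
        Icount
          (convexHull ℝ (⋃ J ∈ {J : Fin (n' + 1) → Finset (Fin p) |
              (Pairwise fun i i' => Disjoint (J i) (J i')) ∧
              (∀ j₀ : Fin p, ∃ i, j₀ ∈ J i) ∧ (∀ i, (J i).card = a i)},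
            ∑ i, ∑ j ∈ J i, (B i j).1),
           convexHull ℝ (⋃ J ∈ {J : Fin (n' + 1) → Finset (Fin p) |
              (Pairwise fun i i' => Disjoint (J i) (J i')) ∧
              (∀ j₀ : Fin p, ∃ i, j₀ ∈ J i) ∧ (∀ i, (J i).card = a i)},
            ∑ i, ∑ j ∈ J i, (B i j).2)) := by
  have hpair : ∀ i j, IsConePair (supportCone Γ) (B i j).1 (B i j).2 := fun i j =>
    (hB i j).1.isConePair (hB i j).2.1 (hB i j).2.2
  exact icountProd_sum_prismPair (fun i j => (hB i j).1.convex) (fun i j => (hB i j).1.nonempty)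
    (fun i j => (hB i j).2.1.convex) (fun i j => (hB i j).2.1.nonempty)
    fun a => finite_inter_range_ι (isBounded_symmDiff_partitionHull hpair a)
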